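/- arXiv:2502.13482 — 7 statements merged into one kernel-verified Lean document; each statement's English description precedes it below -/
import Mathlib

section
/- Let f₁(x) = (x − 3)²/2 and f₂(x) = (x + 3)²/2 on ℝ, and f = (f₁ + f₂)/2. Then f attains its minimum uniquely at x⋆ = 0; nevertheless f₁'(2)/|f₁'(2)| + f₂'(2)/|f₂'(2)| = 0, and consequently, for any step size γ > 0, the sequence defined by x⁰ = 2 and x^{k+1} = x^k − (γ/2)·(f₁'(x^k)/|f₁'(x^k)| + f₂'(x^k)/|f₂'(x^k)|) satisfies x^k = 2 for all k ∈ ℕ, while |f'(2)| = 2 ≠ 0. -/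
lemma aux_deriv (a x : ℝ) : deriv (fun y : ℝ => (y + a) ^ 2 / 2) x = x + a := by
  have h : HasDerivAt (fun y : ℝ => (y + a) ^ 2 / 2) (x + a) x := by
    have := (((hasDerivAt_id x).add_const a).pow 2).div_const 2
    simpa [mul_comm, mul_assoc] using this
  exact h.deriv

/-- Counterexample (Example 1): for `f₁(x) = (x−3)²/2`, `f₂(x) = (x+3)²/2` and
`f = (f₁ + f₂)/2`, the function `f` is uniquely minimized at `x⋆ = 0`, yet the
normalized-gradient estimator vanishes at `x = 2`, so the iterates of distributed
gradient descent with exact normalization started at `x⁰ = 2` never move, even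
though `|f'(2)| = 2 ≠ 0`. -/
theorem normalized_distributed_gd_counterexample
    (f₁ f₂ f : ℝ → ℝ)
    (hf₁ : ∀ x, f₁ x = (x - 3) ^ 2 / 2)
    (hf₂ : ∀ x, f₂ x = (x + 3) ^ 2 / 2)
    (hf : ∀ x, f x = (f₁ x + f₂ x) / 2) :
    (∀ x : ℝ, x ≠ 0 → f 0 < f x) ∧
    (deriv f₁ 2 / |deriv f₁ 2| + deriv f₂ 2 / |deriv f₂ 2| = 0) ∧
    (∀ γ : ℝ, 0 < γ → ∀ x : ℕ → ℝ, x 0 = 2 →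
      (∀ k : ℕ, x (k + 1) = x k -
        (γ / 2) * (deriv f₁ (x k) / |deriv f₁ (x k)| +
                   deriv f₂ (x k) / |deriv f₂ (x k)|)) →
      ∀ k : ℕ, x k = 2) ∧
    |deriv f 2| = 2 ∧ (2 : ℝ) ≠ 0 := by
  have hf₁' : f₁ = fun y : ℝ => (y + (-3)) ^ 2 / 2 := by
    funext y; rw [hf₁ y]; ring
  have hf₂' : f₂ = fun y : ℝ => (y + 3) ^ 2 / 2 := by
    funext y; exact hf₂ y
  have hd1 : ∀ y : ℝ, deriv f₁ y = y - 3 := by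
    intro y; rw [hf₁', aux_deriv]; ring
  have hd2 : ∀ y : ℝ, deriv f₂ y = y + 3 := by
    intro y; rw [hf₂', aux_deriv]
  have hfe : f = fun y : ℝ => (y ^ 2 + 9) / 2 := by
    funext y; rw [hf y, hf₁ y, hf₂ y]; ring
  have hdf : deriv f 2 = 2 := by
    rw [hfe]
    have h : HasDerivAt (fun y : ℝ => (y ^ 2 + 9) / 2) 2 (2 : ℝ) := by
      have := (((hasDerivAt_id (2 : ℝ)).pow 2).add_const 9).div_const 2
      norm_num at this
      simpa using this
    exact h.deriv
  refine ⟨?_, ?_, ?_, by rw [hdf]; norm_num, by norm_num⟩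
  · intro x hx
    rw [hfe]
    have : x ^ 2 > 0 := by positivity
    simp only
    nlinarith
  · rw [hd1, hd2]; norm_num
  · intro γ hγ x hx0 hrec k
    induction k with
    | zero => exact hx0
    | succ n ih =>
      rw [hrec n, ih, hd1, hd2]
      norm_num
end

section
/- Let d ∈ ℕ, let α, β, R be real numbers with 0 < β ≤ α and R ≥ 0, and let h ∈ ℝ^d satisfy ‖h‖ ≤ R. Then ‖h − β·N_α(h)‖ ≤ (1 − β/(α + R))·R. -/
/-- For `0 < β ≤ α`, `R ≥ 0` and `h ∈ ℝ^d` with `‖h‖ ≤ R`, the smoothed normalization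
`N_α(h) = h/(α + ‖h‖)` satisfies `‖h − β·N_α(h)‖ ≤ (1 − β/(α + R))·R`. -/
theorem smoothed_normalization_contraction_bound
    (d : ℕ) (α β R : ℝ) (hβ : 0 < β) (hβα : β ≤ α) (hR : 0 ≤ R)
    (h : EuclideanSpace ℝ (Fin d)) (hh : ‖h‖ ≤ R) :
    ‖h - β • ((α + ‖h‖)⁻¹ • h)‖ ≤ (1 - β / (α + R)) * R := by
  set n := ‖h‖ with hn
  have hn0 : 0 ≤ n := norm_nonneg h
  have hα : 0 < α := lt_of_lt_of_le hβ hβα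
  have hαn : 0 < α + n := by linarith
  have hαR : 0 < α + R := by linarith
  have key : h - β • ((α + n)⁻¹ • h) = (1 - β / (α + n)) • h := by
    rw [sub_smul, one_smul, smul_smul, div_eq_mul_inv]
  rw [key, norm_smul]
  have hfac : 0 ≤ 1 - β / (α + n) := by
    rw [sub_nonneg, div_le_one hαn]; linarith
  rw [Real.norm_eq_abs, abs_of_nonneg hfac, ← hn]
  rw [sub_mul, sub_mul, div_mul_eq_mul_div, div_mul_eq_mul_div, sub_le_sub_iff,
    one_mul, one_mul, add_div' _ _ _ (ne_of_gt hαR), add_div' _ _ _ (ne_of_gt hαn),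
    div_le_div_iff₀ hαR hαn]
  have hkey : 0 ≤ (R - n) * ((α + n) * (α + R) - β * α) := by
    apply mul_nonneg (by linarith)
    nlinarith
  nlinarith [hkey]
end

section
/- Let d ∈ ℕ and let h : ℝ^d → ℝ be differentiable with L-Lipschitz gradient for some L > 0. Let α, β, γ, R > 0 satisfy β ≤ α and γ ≤ (β·R/(α + R))·(1/L). Let x, x' ∈ ℝ^d with ‖x' − x‖ ≤ γ, let g ∈ ℝ^d with ‖∇h(x) − g‖ ≤ R, and set g' = g + β·N_α(∇h(x) − g). Then ‖∇h(x') − g'‖ ≤ R. -/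
/-- One-step memory tracking lemma for α-NormEC: if `h` is differentiable with
`L`-Lipschitz gradient, `0 < β ≤ α`, `γ ≤ (βR/(α+R))·(1/L)`, `‖x' − x‖ ≤ γ`,
`‖∇h(x) − g‖ ≤ R`, and `g' = g + β·N_α(∇h(x) − g)`, then `‖∇h(x') − g'‖ ≤ R`. -/
theorem alpha_normec_one_step_tracking
    (d : ℕ) (h : EuclideanSpace ℝ (Fin d) → ℝ) (L : ℝ) (hL : 0 < L)
    (hdiff : Differentiable ℝ h)
    (hlip : ∀ x y, ‖gradient h x - gradient h y‖ ≤ L * ‖x - y‖)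
    (α β γ R : ℝ) (hα : 0 < α) (hβ : 0 < β) (hγ : 0 < γ) (hR : 0 < R)
    (hβα : β ≤ α) (hγle : γ ≤ (β * R / (α + R)) * (1 / L))
    (x x' g g' : EuclideanSpace ℝ (Fin d))
    (hstep : ‖x' - x‖ ≤ γ)
    (hg : ‖gradient h x - g‖ ≤ R)
    (hg' : g' = g + β • ((α + ‖gradient h x - g‖)⁻¹ • (gradient h x - g))) :
    ‖gradient h x' - g'‖ ≤ R := by
  set e : EuclideanSpace ℝ (Fin d) := gradient h x - g with he
  set t : ℝ := ‖e‖ with ht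
  have ht0 : 0 ≤ t := norm_nonneg _
  have hαt : 0 < α + t := by linarith
  have hαR : 0 < α + R := by linarith
  have hcoef : 0 ≤ 1 - β * (α + t)⁻¹ := by
    have : β * (α + t)⁻¹ ≤ 1 := by
      rw [mul_inv_le_iff₀ hαt]; linarith
    linarith
  have hdecomp : gradient h x' - g' =
      (gradient h x' - gradient h x) + (1 - β * (α + t)⁻¹) • e := by
    rw [hg', he]
    simp only [smul_smul, sub_smul, one_smul]
    abel
  have hlipbound : ‖gradient h x' - gradient h x‖ ≤ L * γ := by
    calc ‖gradient h x' - gradient h x‖ ≤ L * ‖x' - x‖ := hlip x' x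
    _ ≤ L * γ := by nlinarith
  have hnorm : ‖gradient h x' - g'‖ ≤ L * γ + (1 - β * (α + t)⁻¹) * t := by
    rw [hdecomp]
    refine (norm_add_le _ _).trans ?_
    gcongr
    rw [norm_smul, Real.norm_eq_abs, abs_of_nonneg hcoef]
  have hLγ : L * γ * (α + R) ≤ β * R := by
    have h1 : γ * (L * (α + R)) ≤ (β * R / (α + R)) * (1 / L) * (L * (α + R)) :=
      mul_le_mul_of_nonneg_right hγle (by positivity)
    calc L * γ * (α + R) = γ * (L * (α + R)) := by ring
    _ ≤ (β * R / (α + R)) * (1 / L) * (L * (α + R)) := h1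
    _ = β * R := by field_simp
  -- key inequality: L*γ + (1 - β/(α+t)) * t ≤ R
  have hkey : L * γ + (1 - β * (α + t)⁻¹) * t ≤ R := by
    rw [← sub_nonneg]
    have hinv : (α + t)⁻¹ * (α + t) = 1 := inv_mul_cancel₀ hαt.ne'
    have hLγt : L * γ * (α + t) ≤ β * R := by nlinarith [mul_le_mul_of_nonneg_left hg (mul_nonneg hL.le hγ.le)]
    have : 0 ≤ (R - (L * γ + (1 - β * (α + t)⁻¹) * t)) * (α + t) := by
      have expand : (R - (L * γ + (1 - β * (α + t)⁻¹) * t)) * (α + t)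
          = R * (α + t) - L * γ * (α + t) - t * (α + t) + β * t * ((α + t)⁻¹ * (α + t)) := by
        ring
      rw [expand, hinv]
      nlinarith
    nlinarith
  linarith
end

section
/- Consider the α-NormEC iterates for differentiable functions f₁, …, f_n : ℝ^d → ℝ, where each f_i has L_i-Lipschitz gradient. Let L_max = max_{1≤i≤n} L_i and R = max_{1≤i≤n} ‖∇f_i(x⁰) − g_i⁰‖. Assume 0 < β ≤ α and 0 < γ ≤ (β·R/(α + R))·(1/L_max). Then for every k ∈ ℕ and every i ∈ {1, …, n}: ‖∇f_i(x^k) − g_i^k‖ ≤ R, and moreover ‖∇f_i(x^k) − g_i^{k+1}‖ ≤ (1 − β/(α + R))·R ≤ R. -/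
open scoped Classical

/-- Memory tracking along the α-NormEC trajectory: with `0 < β ≤ α`,
`0 < γ ≤ (βR/(α+R))·(1/L_max)`, where `R = max_i ‖∇f_i(x⁰) − g_i⁰‖` and
`L_max = max_i L_i`, the α-NormEC iterates satisfy, for every `k` and `i`,
`‖∇f_i(x^k) − g_i^k‖ ≤ R` and `‖∇f_i(x^k) − g_i^{k+1}‖ ≤ (1 − β/(α+R))·R ≤ R`. -/
theorem alpha_normec_memory_tracking
    (d n : ℕ) (hn : 0 < n)
    (f : Fin n → EuclideanSpace ℝ (Fin d) → ℝ)
    (hdiff : ∀ i, Differentiable ℝ (f i))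
    (L : Fin n → ℝ) (hLpos : ∀ i, 0 < L i)
    (hlip : ∀ i x y, ‖gradient (f i) x - gradient (f i) y‖ ≤ L i * ‖x - y‖)
    (α β γ Lmax R : ℝ)
    (hLmax : Lmax = Finset.univ.sup' (Finset.univ_nonempty_iff.mpr ⟨⟨0, hn⟩⟩) L)
    (x : ℕ → EuclideanSpace ℝ (Fin d))
    (g : Fin n → ℕ → EuclideanSpace ℝ (Fin d))
    (hR : R = Finset.univ.sup' (Finset.univ_nonempty_iff.mpr ⟨⟨0, hn⟩⟩)
      (fun i => ‖gradient (f i) (x 0) - g i 0‖))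
    (hβ : 0 < β) (hβα : β ≤ α)
    (hγ : 0 < γ) (hγle : γ ≤ (β * R / (α + R)) * (1 / Lmax))
    (hg : ∀ i k, g i (k + 1) = g i k +
      β • ((α + ‖gradient (f i) (x k) - g i k‖)⁻¹ • (gradient (f i) (x k) - g i k)))
    (hx : ∀ k, x (k + 1) =
      if (n : ℝ)⁻¹ • ∑ i, g i (k + 1) = 0 then x k
      else x k - γ • ‖(n : ℝ)⁻¹ • ∑ i, g i (k + 1)‖⁻¹ • ((n : ℝ)⁻¹ • ∑ i, g i (k + 1))) :
    ∀ k i, ‖gradient (f i) (x k) - g i k‖ ≤ R ∧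
      ‖gradient (f i) (x k) - g i (k + 1)‖ ≤ (1 - β / (α + R)) * R ∧
      (1 - β / (α + R)) * R ≤ R := by

  have hα : 0 < α := lt_of_lt_of_le hβ hβα
  have hR0 : 0 ≤ R := by
    rw [hR]
    exact le_trans (norm_nonneg _)
      (Finset.le_sup' (fun i => ‖gradient (f i) (x 0) - g i 0‖) (Finset.mem_univ ⟨0, hn⟩))
  have hαR : 0 < α + R := by linarith
  have hLmaxpos : 0 < Lmax := by
    rw [hLmax]
    exact lt_of_lt_of_le (hLpos ⟨0, hn⟩) (Finset.le_sup' L (Finset.mem_univ ⟨0, hn⟩))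
  have hγL : Lmax * γ ≤ β * R / (α + R) := by
    have h1 : Lmax * γ ≤ Lmax * ((β * R / (α + R)) * (1 / Lmax)) :=
      mul_le_mul_of_nonneg_left hγle hLmaxpos.le
    have h2 : Lmax * ((β * R / (α + R)) * (1 / Lmax)) = β * R / (α + R) := by
      field_simp
    linarith
  have hCnn : 0 ≤ 1 - β / (α + R) := by
    have : β / (α + R) ≤ 1 := (div_le_one hαR).mpr (by linarith)
    linarith
  have hlast : (1 - β / (α + R)) * R ≤ R := by nlinarith [div_nonneg hβ.le hαR.le]
  -- step size bound
  have hstep : ∀ k, ‖x (k + 1) - x k‖ ≤ γ := by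
    intro k
    rw [hx k]
    split_ifs with h
    · simp [hγ.le]
    · have hv : ‖(n : ℝ)⁻¹ • ∑ i, g i (k + 1)‖ ≠ 0 := norm_ne_zero_iff.mpr h
      have heq : x k - γ • ‖(n : ℝ)⁻¹ • ∑ i, g i (k + 1)‖⁻¹ • ((n : ℝ)⁻¹ • ∑ i, g i (k + 1))
          - x k = -(γ • ‖(n : ℝ)⁻¹ • ∑ i, g i (k + 1)‖⁻¹ • ((n : ℝ)⁻¹ • ∑ i, g i (k + 1))) := by
        abel
      rw [heq, norm_neg, norm_smul, norm_smul, norm_inv, norm_norm, inv_mul_cancel₀ hv,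
        mul_one, Real.norm_eq_abs, abs_of_pos hγ]
  -- key lemma: one-step contraction
  have key : ∀ k i, ‖gradient (f i) (x k) - g i k‖ ≤ R →
      ‖gradient (f i) (x k) - g i (k + 1)‖ ≤ (1 - β / (α + R)) * R := by
    intro k i ht
    set r := gradient (f i) (x k) - g i k with hr
    set t := ‖r‖ with htdef
    have ht0 : 0 ≤ t := norm_nonneg _
    have hαt : 0 < α + t := by linarith
    have heq : gradient (f i) (x k) - g i (k + 1) = (1 - β * (α + t)⁻¹) • r := by
      rw [hg i k, ← htdef, ← hr, smul_smul]
      module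
    have hcnn : 0 ≤ 1 - β * (α + t)⁻¹ := by
      have : β * (α + t)⁻¹ ≤ 1 := by
        rw [← div_eq_mul_inv]
        exact (div_le_one hαt).mpr (by linarith)
      linarith
    rw [heq, norm_smul, Real.norm_eq_abs, abs_of_nonneg hcnn]
    have hmono : 1 - β * (α + t)⁻¹ ≤ 1 - β / (α + R) := by
      rw [← div_eq_mul_inv]
      have : β / (α + R) ≤ β / (α + t) := by
        gcongr
      linarith
    exact mul_le_mul hmono ht ht0 hCnn
  -- main induction
  have main : ∀ k i, ‖gradient (f i) (x k) - g i k‖ ≤ R := by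
    intro k
    induction k with
    | zero =>
      intro i
      rw [hR]
      exact Finset.le_sup' (fun i => ‖gradient (f i) (x 0) - g i 0‖) (Finset.mem_univ i)
    | succ k ih =>
      intro i
      have hB := key k i (ih i)
      have hLi : L i ≤ Lmax := by
        rw [hLmax]; exact Finset.le_sup' _ (Finset.mem_univ i)
      have hlipk : ‖gradient (f i) (x (k + 1)) - gradient (f i) (x k)‖ ≤ Lmax * γ := by
        calc ‖gradient (f i) (x (k + 1)) - gradient (f i) (x k)‖
            ≤ L i * ‖x (k + 1) - x k‖ := hlip i _ _
          _ ≤ Lmax * γ := by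
              apply mul_le_mul hLi (hstep k) (norm_nonneg _) hLmaxpos.le
      have htri : ‖gradient (f i) (x (k + 1)) - g i (k + 1)‖ ≤
          ‖gradient (f i) (x (k + 1)) - gradient (f i) (x k)‖ +
          ‖gradient (f i) (x k) - g i (k + 1)‖ := by
        have : gradient (f i) (x (k + 1)) - g i (k + 1) =
            (gradient (f i) (x (k + 1)) - gradient (f i) (x k)) +
            (gradient (f i) (x k) - g i (k + 1)) := by abel
        rw [this]; exact norm_add_le _ _
      have hexp : (1 - β / (α + R)) * R = R - β * R / (α + R) := by
        field_simp
      linarith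
  intro k i
  exact ⟨main k i, key k i (main k i), hlast⟩
end

section
/- Let d ∈ ℕ and let f : ℝ^d → ℝ be differentiable with L-Lipschitz gradient for some L > 0. Let γ > 0, x ∈ ℝ^d, g ∈ ℝ^d, and set x' = x − γ·g/‖g‖ if g ≠ 0 and x' = x if g = 0. Then f(x') ≤ f(x) − γ‖∇f(x)‖ + 2γ‖∇f(x) − g‖ + (L/2)·γ². -/
/-!
Along the segment from `x` to `y`, the derivative of `f` exceeds `⟪∇f x, y - x⟫` by at most
`L t ‖y - x‖²` at time `t`, which integrates to the descent lemma
`f y ≤ f x + ⟪∇f x, y - x⟫ + (L/2)‖y - x‖²`. For the step `x' = x - γ u` with `u = g / ‖g‖`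
(`u = 0` when `g = 0`, so that case needs no separate treatment), writing `∇f x = g + (∇f x - g)` gives
`⟪∇f x, u⟫ ≥ ‖g‖ - ‖∇f x - g‖ ≥ ‖∇f x‖ - 2‖∇f x - g‖`, and `‖u‖ ≤ 1`.
-/

open InnerProductSpace NormedSpace

section Normalize

variable {V : Type*} [NormedAddCommGroup V] [InnerProductSpace ℝ V]

theorem NormedSpace.norm_normalize_le (x : V) : ‖normalize x‖ ≤ 1 := by
  by_cases hx : x = 0
  · simp [hx]
  · exact (norm_normalize hx).le

theorem NormedSpace.real_inner_self_normalize (x : V) : ⟪x, normalize x⟫_ℝ = ‖x‖ := by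
  rw [NormedSpace.normalize, real_inner_smul_right, real_inner_self_eq_norm_sq, sq, ← mul_assoc,
    inv_mul_mul_self]

theorem NormedSpace.norm_sub_two_mul_norm_sub_le_inner_normalize (G g : V) :
    ‖G‖ - 2 * ‖G - g‖ ≤ ⟪G, normalize g⟫_ℝ := by
  have hsplit : ⟪G, normalize g⟫_ℝ = ‖g‖ + ⟪G - g, normalize g⟫_ℝ := by
    rw [inner_sub_left, real_inner_self_normalize]; ring
  have herror : -‖G - g‖ ≤ ⟪G - g, normalize g⟫_ℝ :=
    calc -‖G - g‖ ≤ -(‖G - g‖ * ‖normalize g‖) := by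
          gcongr; exact mul_le_of_le_one_right (norm_nonneg _) (norm_normalize_le g)
      _ ≤ ⟪G - g, normalize g⟫_ℝ := neg_le_of_abs_le (abs_real_inner_le_norm _ _)
  have htriangle : ‖G‖ ≤ ‖g‖ + ‖G - g‖ := norm_le_insert' G g
  linarith

end Normalize

section DescentLemma

variable {F : Type*} [NormedAddCommGroup F] [InnerProductSpace ℝ F] [CompleteSpace F]
  {f : F → ℝ} {L : ℝ}

theorem HasGradientAt.hasDerivAt_comp_add_smul {f' x v : F} {t : ℝ}
    (hf : HasGradientAt f f' (x + t • v)) :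
    HasDerivAt (fun s : ℝ => f (x + s • v)) ⟪f', v⟫_ℝ t := by
  have hline : HasDerivAt (fun s : ℝ => x + s • v) v t := by
    simpa using ((hasDerivAt_id t).smul_const v).const_add x
  exact (hf.hasFDerivAt.comp_hasDerivAt t hline).congr_deriv (by simp)

theorem inner_gradient_add_smul_sub_le
    (hlip : ∀ x y, ‖gradient f x - gradient f y‖ ≤ L * ‖x - y‖) (x v : F) {t : ℝ} (ht : 0 ≤ t) :
    ⟪gradient f (x + t • v) - gradient f x, v⟫_ℝ ≤ L * t * ‖v‖ ^ 2 :=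
  calc _ ≤ ‖gradient f (x + t • v) - gradient f x‖ * ‖v‖ := real_inner_le_norm _ _
    _ ≤ L * ‖t • v‖ * ‖v‖ := by gcongr; simpa using hlip (x + t • v) x
    _ = L * t * ‖v‖ ^ 2 := by rw [norm_smul, Real.norm_of_nonneg ht]; ring

theorem le_add_inner_gradient_add_sq_of_lipschitz_gradient (hdiff : Differentiable ℝ f)
    (hlip : ∀ x y, ‖gradient f x - gradient f y‖ ≤ L * ‖x - y‖) (x y : F) :
    f y ≤ f x + ⟪gradient f x, y - x⟫_ℝ + L / 2 * ‖y - x‖ ^ 2 := by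
  set v := y - x
  have hderiv (t : ℝ) :
      HasDerivAt (fun s : ℝ => f (x + s • v)) ⟪gradient f (x + t • v), v⟫_ℝ t :=
    (hdiff _).hasGradientAt.hasDerivAt_comp_add_smul
  have hbound (t : ℝ) :
      HasDerivAt (fun s : ℝ => f x + s * ⟪gradient f x, v⟫_ℝ + L / 2 * s ^ 2 * ‖v‖ ^ 2)
        (⟪gradient f x, v⟫_ℝ + L * t * ‖v‖ ^ 2) t := by
    refine ((((hasDerivAt_id t).mul_const ⟪gradient f x, v⟫_ℝ).const_add (f x)).add
      (((hasDerivAt_pow 2 t).const_mul (L / 2)).mul_const (‖v‖ ^ 2))).congr_deriv ?_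
    push_cast; ring
  have hderiv_le (t : ℝ) (ht : t ∈ Set.Ico (0 : ℝ) 1) :
      ⟪gradient f (x + t • v), v⟫_ℝ ≤ ⟪gradient f x, v⟫_ℝ + L * t * ‖v‖ ^ 2 := by
    have := inner_gradient_add_smul_sub_le hlip x v ht.1
    rw [inner_sub_left] at this
    linarith
  have := image_le_of_deriv_right_le_deriv_boundary
    (fun t _ => (hderiv t).continuousAt.continuousWithinAt)
    (fun t _ => (hderiv t).hasDerivWithinAt) (by simp)
    (fun t _ => (hbound t).continuousAt.continuousWithinAt)
    (fun t _ => (hbound t).hasDerivWithinAt) hderiv_le (Set.right_mem_Icc.2 zero_le_one)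
  simpa [v] using this

end DescentLemma

/-- Per-iteration descent inequality for the normalized server step: if `f` is
differentiable with `L`-Lipschitz gradient and `x' = x − γ·g/‖g‖` (with `x' = x`
when `g = 0`), then `f(x') ≤ f(x) − γ‖∇f(x)‖ + 2γ‖∇f(x) − g‖ + (L/2)γ²`. -/
theorem normalized_step_descent
    (d : ℕ) (f : EuclideanSpace ℝ (Fin d) → ℝ) (L : ℝ) (hL : 0 < L)
    (hdiff : Differentiable ℝ f)
    (hlip : ∀ x y, ‖gradient f x - gradient f y‖ ≤ L * ‖x - y‖)
    (γ : ℝ) (hγ : 0 < γ) (x g x' : EuclideanSpace ℝ (Fin d))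
    (hx' : x' = if g = 0 then x else x - γ • ‖g‖⁻¹ • g) :
    f x' ≤ f x - γ * ‖gradient f x‖ + 2 * γ * ‖gradient f x - g‖ + (L / 2) * γ ^ 2 := by
  obtain rfl : x' = x - γ • normalize g := by
    rw [hx']; split_ifs with hg <;> simp [hg, NormedSpace.normalize]
  have hdescent := le_add_inner_gradient_add_sq_of_lipschitz_gradient hdiff hlip x
    (x - γ • normalize g)
  rw [sub_sub_cancel_left, inner_neg_right, real_inner_smul_right, norm_neg, norm_smul,
    Real.norm_of_nonneg hγ.le] at hdescent
  have hinner := norm_sub_two_mul_norm_sub_le_inner_normalize (gradient f x) g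
  have hunit := norm_normalize_le g
  calc f (x - γ • normalize g)
      ≤ f x + -(γ * ⟪gradient f x, normalize g⟫_ℝ) + L / 2 * (γ * ‖normalize g‖) ^ 2 := hdescent
    _ ≤ f x + -(γ * (‖gradient f x‖ - 2 * ‖gradient f x - g‖)) + L / 2 * (γ * 1) ^ 2 := by
        gcongr
    _ = _ := by ring
end

section
/- (Server–client memory gap under DP noise.) Consider the DP-α-NormEC iterates on a probability space (Ω, μ) driven by noise random vectors z_i^k : Ω → ℝ^d (1 ≤ i ≤ n, k ≥ 0) that are measurable, with ‖z_i^k‖² integrable, E[‖z_i^k‖²] ≤ σ² for all i, k, and E[⟨z_i^k, z_j^l⟩] = 0 whenever (i, k) ≠ (j, l). Assume the server memory is initialized consistently: ĝ⁰ = (1/n)∑_{i=1}^n g_i⁰. Then for every k ∈ ℕ: E[‖ĝ^{k+1} − (1/n)∑_{i=1}^n g_i^{k+1}‖] ≤ √(β²·(k + 1)·σ²/n). -/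
/-!
The normalized directions `Δ_i^k` enter the server memory `ĝ` and the averaged client memories
`(1/n) ∑ g_i` with the same weight `β/n`, so `ĝ^m - (1/n) ∑ g_i^m` is exactly `β/n` times the
accumulated noise `∑_{l<m} ∑_i z_i^l`, whatever the iterates `x^k` are. The `(k+1)·n` noise
vectors are orthogonal in `L²`, so the second moment of their sum is at most `(k+1)·n·σ²`, and
`E‖S‖ ≤ √(E‖S‖²)` finishes.
-/

open MeasureTheory
open scoped RealInnerProductSpace

theorem server_sub_mean_client_eq_smul_sum_noise {E : Type*} [AddCommGroup E] [Module ℝ E]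
    {n : ℕ} (β : ℝ) (g : Fin n → ℕ → E) (ghat : ℕ → E) (Δ z : Fin n → ℕ → E)
    (hghat0 : ghat 0 = (n : ℝ)⁻¹ • ∑ i, g i 0)
    (hg : ∀ i k, g i (k + 1) = g i k + β • Δ i k)
    (hghat : ∀ k, ghat (k + 1) = ghat k + (β / n) • ∑ i, (Δ i k + z i k)) (m : ℕ) :
    ghat m - (n : ℝ)⁻¹ • ∑ i, g i m = (β / n) • ∑ l ∈ Finset.range m, ∑ i, z i l := by
  induction m with
  | zero => simp [hghat0]
  | succ m ih =>
    rw [hghat, Finset.sum_range_succ, smul_add, ← ih, Finset.sum_add_distrib]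
    simp only [hg, Finset.sum_add_distrib, ← Finset.smul_sum]
    module

section SecondMoment

variable {ι Ω E : Type*} [MeasurableSpace Ω] {μ : Measure Ω}
  [NormedAddCommGroup E] [InnerProductSpace ℝ E]

theorem MeasureTheory.MemLp.integrable_inner {X Y : Ω → E} (hX : MemLp X 2 μ)
    (hY : MemLp Y 2 μ) : Integrable (fun ω => ⟪X ω, Y ω⟫) μ :=
  (L2.integrable_inner (𝕜 := ℝ) (hX.toLp X) (hY.toLp Y)).congr <|
    hX.coeFn_toLp.mp <| hY.coeFn_toLp.mono fun _ hYω hXω => by simp only [hXω, hYω]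

theorem integral_norm_sum_sq_eq_sum_of_orthogonal {s : Finset ι} {Z : ι → Ω → E}
    (hZ : ∀ i ∈ s, MemLp (Z i) 2 μ)
    (horth : ∀ i ∈ s, ∀ j ∈ s, i ≠ j → ∫ ω, ⟪Z i ω, Z j ω⟫ ∂μ = 0) :
    ∫ ω, ‖∑ i ∈ s, Z i ω‖ ^ 2 ∂μ = ∑ i ∈ s, ∫ ω, ‖Z i ω‖ ^ 2 ∂μ := by
  simp_rw [← real_inner_self_eq_norm_sq, sum_inner, inner_sum]
  rw [integral_finsetSum _ fun i hi => integrable_finsetSum _ fun j hj =>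
    (hZ i hi).integrable_inner (hZ j hj)]
  refine Finset.sum_congr rfl fun i hi => ?_
  rw [integral_finsetSum _ fun j hj => (hZ i hi).integrable_inner (hZ j hj)]
  exact Finset.sum_eq_single_of_mem i hi fun j hj hji => horth i hi j hj hji.symm

theorem integral_le_sqrt_integral_sq [IsProbabilityMeasure μ] {X : Ω → ℝ} (hX : MemLp X 2 μ) :
    ∫ ω, X ω ∂μ ≤ √(∫ ω, X ω ^ 2 ∂μ) := by
  have hvar := ProbabilityTheory.variance_nonneg X μ
  rw [ProbabilityTheory.variance_eq_sub hX] at hvar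
  exact (le_abs_self _).trans (Real.abs_le_sqrt (by simpa using hvar))

theorem integral_norm_sum_le_of_orthogonal [IsProbabilityMeasure μ] {s : Finset ι}
    {Z : ι → Ω → E} {σ : ℝ} (hZ : ∀ i ∈ s, MemLp (Z i) 2 μ)
    (horth : ∀ i ∈ s, ∀ j ∈ s, i ≠ j → ∫ ω, ⟪Z i ω, Z j ω⟫ ∂μ = 0)
    (hvar : ∀ i ∈ s, ∫ ω, ‖Z i ω‖ ^ 2 ∂μ ≤ σ ^ 2) :
    ∫ ω, ‖∑ i ∈ s, Z i ω‖ ∂μ ≤ √(s.card * σ ^ 2) := by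
  have hsum : MemLp (fun ω => ∑ i ∈ s, Z i ω) 2 μ := memLp_finsetSum s hZ
  calc ∫ ω, ‖∑ i ∈ s, Z i ω‖ ∂μ ≤ √(∫ ω, ‖∑ i ∈ s, Z i ω‖ ^ 2 ∂μ) :=
        integral_le_sqrt_integral_sq hsum.norm
    _ ≤ √(s.card * σ ^ 2) := by
        rw [integral_norm_sum_sq_eq_sum_of_orthogonal hZ horth]
        gcongr
        simpa using Finset.sum_le_card_nsmul s _ _ hvar

end SecondMoment

theorem dp_alpha_normec_server_client_gap_general
    (d n : ℕ)
    {Ω : Type*} [MeasurableSpace Ω] (μ : Measure Ω) [IsProbabilityMeasure μ]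
    (f : Fin n → EuclideanSpace ℝ (Fin d) → ℝ)
    (α β σ : ℝ)
    (x : ℕ → Ω → EuclideanSpace ℝ (Fin d))
    (g : Fin n → ℕ → Ω → EuclideanSpace ℝ (Fin d))
    (ghat : ℕ → Ω → EuclideanSpace ℝ (Fin d))
    (z : Fin n → ℕ → Ω → EuclideanSpace ℝ (Fin d))
    (hzmeas : ∀ i k, Measurable (z i k))
    (hzint : ∀ i k, Integrable (fun ω => ‖z i k ω‖ ^ 2) μ)
    (hzvar : ∀ i k, ∫ ω, ‖z i k ω‖ ^ 2 ∂μ ≤ σ ^ 2)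
    (hzorth : ∀ (i : Fin n) (k : ℕ) (j : Fin n) (l : ℕ), (i, k) ≠ (j, l) →
      ∫ ω, (inner ℝ (z i k ω) (z j l ω) : ℝ) ∂μ = 0)
    (hghat0 : ∀ ω, ghat 0 ω = (n : ℝ)⁻¹ • ∑ i, g i 0 ω)
    (hg : ∀ (ω : Ω) (i : Fin n) (k : ℕ), g i (k + 1) ω = g i k ω +
      β • ((α + ‖gradient (f i) (x k ω) - g i k ω‖)⁻¹ •
        (gradient (f i) (x k ω) - g i k ω)))
    (hghat : ∀ (ω : Ω) (k : ℕ), ghat (k + 1) ω = ghat k ω +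
      (β / n) • ∑ i, (((α + ‖gradient (f i) (x k ω) - g i k ω‖)⁻¹ •
        (gradient (f i) (x k ω) - g i k ω)) + z i k ω)) :
    ∀ k : ℕ, ∫ ω, ‖ghat (k + 1) ω - (n : ℝ)⁻¹ • ∑ i, g i (k + 1) ω‖ ∂μ ≤
      Real.sqrt (β ^ 2 * (k + 1) * σ ^ 2 / n) := by
  intro k
  set P := Finset.range (k + 1) ×ˢ (Finset.univ : Finset (Fin n))
  have hgap : ∀ ω, ghat (k + 1) ω - (n : ℝ)⁻¹ • ∑ i, g i (k + 1) ω =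
      (β / n) • ∑ p ∈ P, z p.2 p.1 ω := fun ω => by
    rw [server_sub_mean_client_eq_smul_sum_noise β (g · · ω) (ghat · ω) _ (z · · ω) (hghat0 ω)
      (hg ω) (hghat ω), Finset.sum_product]
  have hnoise : ∫ ω, ‖∑ p ∈ P, z p.2 p.1 ω‖ ∂μ ≤ √(P.card * σ ^ 2) :=
    integral_norm_sum_le_of_orthogonal
      (fun p _ => (memLp_two_iff_integrable_sq_norm (hzmeas _ _).aestronglyMeasurable).2
        (hzint _ _))
      (fun p _ q _ hpq => hzorth _ _ _ _ (Prod.swap_injective.ne hpq)) (fun p _ => hzvar _ _)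
  calc ∫ ω, ‖ghat (k + 1) ω - (n : ℝ)⁻¹ • ∑ i, g i (k + 1) ω‖ ∂μ
      = |β / n| * ∫ ω, ‖∑ p ∈ P, z p.2 p.1 ω‖ ∂μ := by
        simp_rw [hgap, norm_smul, Real.norm_eq_abs, integral_const_mul]
    _ ≤ |β / n| * √(P.card * σ ^ 2) := by gcongr
    _ = √(β ^ 2 * (k + 1) * σ ^ 2 / n) := by
        rw [← Real.sqrt_sq_eq_abs, ← Real.sqrt_mul (sq_nonneg _)]
        congr 1
        simp only [P, Finset.card_product, Finset.card_range, Finset.card_univ, Fintype.card_fin]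
        rcases eq_or_ne (n : ℝ) 0 with hn | hn
        · simp [hn]
        · push_cast
          field_simp

/-- Server–client memory gap under DP noise (Lemma 3): for the DP-α-NormEC iterates
driven by noise vectors with `E[‖z_i^k‖²] ≤ σ²` and pairwise-orthogonal noise, if the
server memory is initialized consistently `ĝ⁰ = (1/n)∑_i g_i⁰`, then for every `k`,
`E[‖ĝ^{k+1} − (1/n)∑_i g_i^{k+1}‖] ≤ √(β²·(k+1)·σ²/n)`. -/
theorem dp_alpha_normec_server_client_gap
    (d n : ℕ) (hn : 0 < n)
    {Ω : Type*} [MeasurableSpace Ω] (μ : Measure Ω) [IsProbabilityMeasure μ]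
    (f : Fin n → EuclideanSpace ℝ (Fin d) → ℝ)
    (hdiff : ∀ i, Differentiable ℝ (f i))
    (α β γ σ : ℝ) (hα : 0 < α) (hβ : 0 < β) (hγ : 0 < γ) (hσ : 0 ≤ σ)
    (x : ℕ → Ω → EuclideanSpace ℝ (Fin d))
    (g : Fin n → ℕ → Ω → EuclideanSpace ℝ (Fin d))
    (ghat : ℕ → Ω → EuclideanSpace ℝ (Fin d))
    (z : Fin n → ℕ → Ω → EuclideanSpace ℝ (Fin d))
    (hzmeas : ∀ i k, Measurable (z i k))
    (hzint : ∀ i k, Integrable (fun ω => ‖z i k ω‖ ^ 2) μ)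
    (hzvar : ∀ i k, ∫ ω, ‖z i k ω‖ ^ 2 ∂μ ≤ σ ^ 2)
    (hzorth : ∀ (i : Fin n) (k : ℕ) (j : Fin n) (l : ℕ), (i, k) ≠ (j, l) →
      ∫ ω, (inner ℝ (z i k ω) (z j l ω) : ℝ) ∂μ = 0)
    (hghat0 : ∀ ω, ghat 0 ω = (n : ℝ)⁻¹ • ∑ i, g i 0 ω)
    (hg : ∀ (ω : Ω) (i : Fin n) (k : ℕ), g i (k + 1) ω = g i k ω +
      β • ((α + ‖gradient (f i) (x k ω) - g i k ω‖)⁻¹ •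
        (gradient (f i) (x k ω) - g i k ω)))
    (hghat : ∀ (ω : Ω) (k : ℕ), ghat (k + 1) ω = ghat k ω +
      (β / n) • ∑ i, (((α + ‖gradient (f i) (x k ω) - g i k ω‖)⁻¹ •
        (gradient (f i) (x k ω) - g i k ω)) + z i k ω))
    (hx : ∀ (ω : Ω) (k : ℕ), x (k + 1) ω =
      if ghat (k + 1) ω = 0 then x k ω
      else x k ω - γ • ‖ghat (k + 1) ω‖⁻¹ • ghat (k + 1) ω) :
    ∀ k : ℕ, ∫ ω, ‖ghat (k + 1) ω - (n : ℝ)⁻¹ • ∑ i, g i (k + 1) ω‖ ∂μ ≤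
      Real.sqrt (β ^ 2 * (k + 1) * σ ^ 2 / n) :=
  dp_alpha_normec_server_client_gap_general d n μ f α β σ x g ghat z hzmeas hzint hzvar hzorth
    hghat0 hg hghat
end

section
/- Let d ∈ ℕ, τ > 0, and let g⋆, g⁰ ∈ ℝ^d. Define the single-node error-feedback recursion with clipping: g^{k+1} = g^k + Clip_τ(g⋆ − g^k) for k ≥ 0. Then for every k ∈ ℕ: ‖g^k − g⋆‖ ≤ max(0, ‖g⁰ − g⋆‖ − k·τ). -/
/-- Single-node error-feedback recursion with clipping: if
`g^{k+1} = g^k + Clip_τ(g⋆ − g^k)` where `Clip_τ(h) = min(1, τ/‖h‖)·h` (and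
`Clip_τ(0) = 0`), then for every `k`, `‖g^k − g⋆‖ ≤ max(0, ‖g⁰ − g⋆‖ − k·τ)`. -/
theorem single_node_ef_clipping
    (d : ℕ) (τ : ℝ) (hτ : 0 < τ)
    (gstar : EuclideanSpace ℝ (Fin d)) (g : ℕ → EuclideanSpace ℝ (Fin d))
    (hrec : ∀ k, g (k + 1) = g k + (min 1 (τ / ‖gstar - g k‖)) • (gstar - g k)) :
    ∀ k : ℕ, ‖g k - gstar‖ ≤ max 0 (‖g 0 - gstar‖ - k * τ) := by
  intro k
  induction k with
  | zero => simp
  | succ k ih =>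
    have key : g (k+1) - gstar = (1 - min 1 (τ / ‖g k - gstar‖)) • (g k - gstar) := by
      have hsym : gstar - g k = -(g k - gstar) := by abel
      rw [hrec k, hsym]
      rw [norm_neg, smul_neg]
      module
    set n := ‖g k - gstar‖ with hn
    have hn0 : 0 ≤ n := norm_nonneg _
    have hstep : ‖g (k+1) - gstar‖ ≤ max 0 (n - τ) := by
      by_cases hx : g k - gstar = 0
      · rw [key, hx, smul_zero, norm_zero]; exact le_max_left _ _
      have hnp : 0 < n := norm_pos_iff.mpr hx
      rw [key, norm_smul, Real.norm_eq_abs]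
      by_cases hle : n ≤ τ
      · have hmin : min 1 (τ / n) = 1 := by
          rw [min_eq_left]; rw [le_div_iff₀ hnp]; linarith
        rw [hmin]; simp
      · push_neg at hle
        have hmin : min 1 (τ / n) = τ / n := by
          rw [min_eq_right]; rw [div_le_one hnp]; linarith
        rw [hmin, abs_of_nonneg (by rw [sub_nonneg, div_le_one hnp]; linarith)]
        have : (1 - τ / n) * n = n - τ := by field_simp
        rw [this]; exact le_max_right _ _
    refine hstep.trans ?_
    rcases le_or_gt (max 0 (‖g 0 - gstar‖ - k * τ)) 0 with h0 | h0
    · have hn' : n = 0 := le_antisymm (ih.trans h0) hn0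
      rw [hn', max_eq_left (by linarith : (0:ℝ) - τ ≤ 0)]
      exact le_max_left _ _
    · have hpos : 0 < ‖g 0 - gstar‖ - k * τ := by
        rcases lt_max_iff.mp h0 with h | h
        · exact absurd h (lt_irrefl 0)
        · exact h
      have hmax : max 0 (‖g 0 - gstar‖ - k * τ) = ‖g 0 - gstar‖ - k * τ :=
        max_eq_right hpos.le
      apply max_le (le_max_left _ _)
      have : n - τ ≤ ‖g 0 - gstar‖ - (k+1) * τ := by
        rw [hmax] at ih; push_cast; linarith
      exact this.trans (by push_cast; exact le_max_right _ _)
end
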